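/- Let ψ ∈ H_n be a normalized state such that the only product operator h = h₁⊗⋯⊗hₙ with all hᵢ invertible satisfying hψ = ψ is the identity operator. Let g = g₁⊗⋯⊗gₙ be a product operator with all gᵢ invertible such that φ = gψ is normalized and n-way entangled. Suppose (N_j) is a finite family of product operators on H_n with Σ_j N_j†N_j ≤ I (in the positive semidefinite order) and such that for every j there exists b_j ∈ ℂ with N_jψ = b_jφ. Then Σ_j |b_j|² ≤ 1/λ_max(g†g). -/
import Mathlib


open scoped BigOperators Matrix
open MeasureTheory

noncomputable section

/-- The Hilbert space of `n` qubits, identified with `ℂ^(2^n)` via the computational basis: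
states are functions on bit strings. -/
abbrev QubitState (n : ℕ) := (Fin n → Fin 2) → ℂ

/-- Action of the product operator `g 0 ⊗ ⋯ ⊗ g (n-1)` on an `n`-qubit state,
in the computational basis. -/
def prodOp {n : ℕ} (g : Fin n → Matrix (Fin 2) (Fin 2) ℂ) (ψ : QubitState n) : QubitState n :=
  fun x => ∑ y : Fin n → Fin 2, (∏ i, g i (x i) (y i)) * ψ y

/-- The standard Hermitian inner product on `n`-qubit states. -/
def qInner {n : ℕ} (ψ φ : QubitState n) : ℂ := ∑ x, (starRingEnd ℂ) (ψ x) * φ x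

/-- The squared Euclidean norm of an `n`-qubit state. -/
def qNormSq {n : ℕ} (ψ : QubitState n) : ℝ := ∑ x, Complex.normSq (ψ x)

/-- The matrix (in the computational basis) of the product operator `g₁ ⊗ ⋯ ⊗ gₙ`. -/
def prodMatrix {n : ℕ} (g : Fin n → Matrix (Fin 2) (Fin 2) ℂ) :
    Matrix (Fin n → Fin 2) (Fin n → Fin 2) ℂ :=
  Matrix.of fun x y => ∏ i, g i (x i) (y i)

/-- The largest eigenvalue `λ_max(A†A)` of the positive semidefinite matrix `A†A`,
characterized as the supremum of `‖Av‖²` over unit vectors `v`. -/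
def lambdaMaxGram {m : Type*} [Fintype m] (A : Matrix m m ℂ) : ℝ :=
  sSup {r : ℝ | ∃ v : m → ℂ, (∑ i, Complex.normSq (v i)) = 1 ∧
    r = ∑ i, Complex.normSq (A.mulVec v i)}

/-- `φ` factorizes as `v ⊗ w` across slot `k`. -/
def ProductAtSlot {n : ℕ} (φ : QubitState n) (k : Fin n) : Prop :=
  ∃ (v : Fin 2 → ℂ) (w : ({i : Fin n // i ≠ k} → Fin 2) → ℂ),
    ∀ x : Fin n → Fin 2, φ x = v (x k) * w (fun i => x i.1)

/-- `φ` is `n`-way entangled: it is not a product across any single slot. -/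
def NWayEntangled {n : ℕ} (φ : QubitState n) : Prop := ∀ k : Fin n, ¬ ProductAtSlot φ k

lemma prodOp_eq_mulVec {n : ℕ} (g : Fin n → Matrix (Fin 2) (Fin 2) ℂ) (χ : QubitState n) :
    prodOp g χ = (prodMatrix g).mulVec χ := rfl

lemma prodMatrix_mul {n : ℕ} (A B : Fin n → Matrix (Fin 2) (Fin 2) ℂ) :
    prodMatrix (fun i => A i * B i) = prodMatrix A * prodMatrix B := by
  ext x y
  simp only [prodMatrix, Matrix.mul_apply, Matrix.of_apply]
  rw [Finset.prod_univ_sum, Fintype.piFinset_univ]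
  exact Finset.sum_congr rfl fun z _ => by rw [Finset.prod_mul_distrib]

lemma prodOp_mul {n : ℕ} (A B : Fin n → Matrix (Fin 2) (Fin 2) ℂ) (χ : QubitState n) :
    prodOp (fun i => A i * B i) χ = prodOp A (prodOp B χ) := by
  rw [prodOp_eq_mulVec, prodOp_eq_mulVec, prodOp_eq_mulVec, prodMatrix_mul,
    ← Matrix.mulVec_mulVec]

lemma prodOp_one {n : ℕ} (χ : QubitState n) :
    prodOp (fun _ => (1 : Matrix (Fin 2) (Fin 2) ℂ)) χ = χ := by
  rw [prodOp_eq_mulVec]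
  have : prodMatrix (fun _ : Fin n => (1 : Matrix (Fin 2) (Fin 2) ℂ)) = 1 := by
    ext x y
    simp only [prodMatrix, Matrix.of_apply, Matrix.one_apply]
    by_cases h : x = y
    · simp [h]
    · obtain ⟨i, hi⟩ := Function.ne_iff.1 h
      rw [if_neg h]
      exact Finset.prod_eq_zero (Finset.mem_univ i) (by simp [hi])
  rw [this, Matrix.one_mulVec]

lemma prodOp_smul_vec {n : ℕ} (A : Fin n → Matrix (Fin 2) (Fin 2) ℂ) (c : ℂ) (χ : QubitState n) :
    prodOp A (c • χ) = c • prodOp A χ := by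
  funext x
  simp only [prodOp, Pi.smul_apply, smul_eq_mul, Finset.mul_sum]
  exact Finset.sum_congr rfl fun y _ => by ring

lemma prodOp_smul_family {n : ℕ} (A : Fin n → Matrix (Fin 2) (Fin 2) ℂ) (c : Fin n → ℂ)
    (χ : QubitState n) :
    prodOp (fun i => c i • A i) χ = (∏ i, c i) • prodOp A χ := by
  funext x
  simp only [prodOp, Pi.smul_apply, smul_eq_mul, Finset.mul_sum, Matrix.smul_apply]
  refine Finset.sum_congr rfl fun y _ => ?_
  rw [Finset.prod_mul_distrib]
  ring

lemma rank_one_decomp (M : Matrix (Fin 2) (Fin 2) ℂ) (h : ¬ IsUnit M) :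
    ∃ u w : Fin 2 → ℂ, ∀ a b, M a b = u a * w b := by
  have hdet : M.det = 0 := by
    by_contra hd
    exact h ((Matrix.isUnit_iff_isUnit_det M).2 (isUnit_iff_ne_zero.2 hd))
  rw [Matrix.det_fin_two] at hdet
  by_cases h00 : M 0 0 = 0
  · by_cases h01 : M 0 1 = 0
    · exact ⟨![0, 1], ![M 1 0, M 1 1], by
        intro a b; fin_cases a <;> fin_cases b <;> simp [h00, h01]⟩
    · have h10 : M 1 0 = 0 := by
        rw [h00, zero_mul, zero_sub, neg_eq_zero, mul_eq_zero] at hdet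
        tauto
      exact ⟨![M 0 1, M 1 1], ![0, 1], by
        intro a b; fin_cases a <;> fin_cases b <;> simp [h00, h10]⟩
  · refine ⟨![M 0 0, M 1 0], ![1, M 0 1 / M 0 0], ?_⟩
    intro a b
    have h11 : M 1 1 = M 1 0 * (M 0 1 / M 0 0) := by
      field_simp
      linear_combination hdet
    fin_cases a <;> fin_cases b <;> simp [h11] <;> field_simp

lemma qnorm_help {α : Type*} [Fintype α] (ψ : α → ℂ)
    (h : (∑ x, (starRingEnd ℂ) (ψ x) * ψ x) = 1) :
    (∑ x, Complex.normSq (ψ x)) = 1 := by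
  have : ((∑ x, Complex.normSq (ψ x) : ℝ) : ℂ) = 1 := by
    push_cast
    rw [← h]
    exact Finset.sum_congr rfl fun x _ => by rw [Complex.normSq_eq_conj_mul_self]
  exact_mod_cast this

lemma slot_product {n : ℕ} (Nj : Fin n → Matrix (Fin 2) (Fin 2) ℂ) (ψ : QubitState n)
    (k : Fin n) (u w : Fin 2 → ℂ) (hk : ∀ a c, Nj k a c = u a * w c)
    (φ : QubitState n) (c : ℂ) (hφ : ∀ x, φ x = c * prodOp Nj ψ x) :
    ProductAtSlot φ k := by
  refine ⟨fun a => c * u a,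
    fun z => ∑ y : Fin n → Fin 2,
      w (y k) * (∏ i : {i : Fin n // i ≠ k}, Nj i.1 (z i) (y i.1)) * ψ y,
    fun x => ?_⟩
  rw [hφ x]
  simp only [prodOp, Finset.mul_sum]
  refine Finset.sum_congr rfl fun y _ => ?_
  have key : (∏ i, Nj i (x i) (y i))
      = u (x k) * (w (y k) * ∏ i : {i : Fin n // i ≠ k}, Nj i.1 (x i.1) (y i.1)) := by
    rw [← Finset.mul_prod_erase Finset.univ _ (Finset.mem_univ k), hk]
    rw [Finset.prod_subtype (p := fun i => i ≠ k) (Finset.univ.erase k)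
      (fun i => by simp [Finset.mem_erase]) (fun i => Nj i (x i) (y i))]
    ring
  rw [key]; ring

lemma qNormSq_smul {n : ℕ} (c : ℂ) (χ : QubitState n) :
    qNormSq (c • χ) = Complex.normSq c * qNormSq χ := by
  simp [qNormSq, Complex.normSq_mul, Finset.mul_sum]

/-- Optimality bound on the conversion probability: for a normalized state `ψ` with trivial
`GL(2,ℂ)^{⊗n}`-stabilizer and a normalized `n`-way entangled `φ = gψ`, any family of
product Kraus operators `N_j` with `Σ_j N_j†N_j ≤ I` and `N_jψ = b_jφ` satisfies
`Σ_j |b_j|² ≤ 1/λ_max(g†g)`. -/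
theorem conversion_probability_upper_bound (n : ℕ) (ψ : QubitState n)
    (hψnorm : qInner ψ ψ = 1)
    (hstab : ∀ h : Fin n → Matrix (Fin 2) (Fin 2) ℂ, (∀ i, IsUnit (h i)) →
      prodOp h ψ = ψ → ∀ χ : QubitState n, prodOp h χ = χ)
    (g : Fin n → Matrix (Fin 2) (Fin 2) ℂ) (hg : ∀ i, IsUnit (g i))
    (φ : QubitState n) (hφ : φ = prodOp g ψ) (hφnorm : qInner φ φ = 1)
    (hφent : NWayEntangled φ)
    (m : ℕ) (N : Fin m → Fin n → Matrix (Fin 2) (Fin 2) ℂ)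
    (hle : ∀ χ : QubitState n, ∑ j, qNormSq (prodOp (N j) χ) ≤ qNormSq χ)
    (b : Fin m → ℂ) (hb : ∀ j, prodOp (N j) ψ = b j • φ) :
    ∑ j, Complex.normSq (b j) ≤ 1 / lambdaMaxGram (prodMatrix g) := by
  classical
  have hψn : qNormSq ψ = 1 := qnorm_help ψ hψnorm
  have hφn : qNormSq φ = 1 := qnorm_help φ hφnorm
  -- key step: each Kraus operator with nonzero b j is proportional to g
  have key : ∀ j, b j ≠ 0 → ∀ χ : QubitState n, prodOp (N j) χ = b j • prodOp g χ := by
    intro j hbj χ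
    rcases Nat.eq_zero_or_pos n with hn | hn
    · subst hn
      have hid : ∀ (A : Fin 0 → Matrix (Fin 2) (Fin 2) ℂ) (ρ : QubitState 0),
          prodOp A ρ = ρ := by
        intro A ρ
        have hA : A = (fun _ => 1) := funext fun i => Fin.elim0 i
        rw [hA]; exact prodOp_one ρ
      have hψ0 : ψ ≠ 0 := by
        intro h0
        rw [h0] at hψn
        norm_num [qNormSq] at hψn
      have hb1 : b j = 1 := by
        have h1 := hb j
        rw [hid, hφ, hid] at h1
        obtain ⟨x, hx⟩ := Function.ne_iff.1 hψ0
        have := congrFun h1 x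
        simp only [Pi.smul_apply, smul_eq_mul] at this
        have h5 : (b j - 1) * ψ x = 0 := by linear_combination -this
        rcases mul_eq_zero.1 h5 with h6 | h6
        · exact sub_eq_zero.1 h6
        · exact absurd h6 hx
      rw [hid, hid, hb1, one_smul]
    · have hNunit : ∀ i, IsUnit (N j i) := by
        intro k
        by_contra hk
        obtain ⟨u, w, huw⟩ := rank_one_decomp _ hk
        refine hφent k (slot_product (N j) ψ k u w huw φ (b j)⁻¹ ?_)
        intro x
        have hx := congrFun (hb j) x
        simp only [Pi.smul_apply, smul_eq_mul] at hx
        rw [hx, inv_mul_cancel_left₀ hbj]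
      have hgd : ∀ i, IsUnit (g i).det := fun i => (Matrix.isUnit_iff_isUnit_det _).1 (hg i)
      set i0 : Fin n := ⟨0, hn⟩ with hi0
      set c : Fin n → ℂ := fun i => if i = i0 then (b j)⁻¹ else 1 with hc
      have hcprod : (∏ i, c i) = (b j)⁻¹ := by
        rw [hc, Finset.prod_ite_eq' Finset.univ i0 (fun _ => (b j)⁻¹)]
        simp
      have hginv : ∀ ρ : QubitState n, prodOp (fun i => (g i)⁻¹) (prodOp g ρ) = ρ := by
        intro ρ
        rw [← prodOp_mul]
        have h1 : (fun i => (g i)⁻¹ * g i) = fun _ : Fin n => (1 : Matrix (Fin 2) (Fin 2) ℂ) :=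
          funext fun i => Matrix.nonsing_inv_mul _ (hgd i)
        rw [h1, prodOp_one]
      set hfam : Fin n → Matrix (Fin 2) (Fin 2) ℂ := fun i => c i • ((g i)⁻¹ * N j i) with hhf
      have hfψ : prodOp hfam ψ = ψ := by
        rw [hhf, prodOp_smul_family, hcprod, prodOp_mul, hb j, prodOp_smul_vec, hφ, hginv,
          smul_smul, inv_mul_cancel₀ hbj, one_smul]
      have hfunit : ∀ i, IsUnit (hfam i) := by
        intro i
        rw [Matrix.isUnit_iff_isUnit_det, isUnit_iff_ne_zero]
        have hdet : (hfam i).det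
            = c i ^ Fintype.card (Fin 2) * (Ring.inverse (g i).det * (N j i).det) := by
          rw [hhf]
          simp only
          rw [Matrix.det_smul, Matrix.det_mul, Matrix.det_nonsing_inv]
        have hc0 : c i ≠ 0 := by
          rw [hc]
          dsimp only
          split <;> simp [hbj]
        have hgd0 : (g i).det ≠ 0 := isUnit_iff_ne_zero.1 (hgd i)
        have hN0 : (N j i).det ≠ 0 :=
          isUnit_iff_ne_zero.1 ((Matrix.isUnit_iff_isUnit_det _).1 (hNunit i))
        rw [hdet, Ring.inverse_eq_inv]
        exact mul_ne_zero (pow_ne_zero _ hc0) (mul_ne_zero (inv_ne_zero hgd0) hN0)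
      have hstabχ := hstab hfam hfunit hfψ χ
      rw [hhf, prodOp_smul_family, hcprod] at hstabχ
      have h2 : prodOp (fun i => (g i)⁻¹ * N j i) χ = b j • χ := by
        have h4 := congrArg (fun ρ : QubitState n => (b j) • ρ) hstabχ
        simpa [smul_smul, mul_inv_cancel₀ hbj] using h4
      have h3 : (fun i => g i * ((g i)⁻¹ * N j i)) = N j := funext fun i => by
        rw [← mul_assoc, Matrix.mul_nonsing_inv _ (hgd i), one_mul]
      calc prodOp (N j) χ = prodOp (fun i => g i * ((g i)⁻¹ * N j i)) χ := by rw [h3]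
        _ = prodOp g (prodOp (fun i => (g i)⁻¹ * N j i) χ) := prodOp_mul _ _ _
        _ = prodOp g (b j • χ) := by rw [h2]
        _ = b j • prodOp g χ := prodOp_smul_vec _ _ _
  -- the supremum argument
  set Sset : Set ℝ := {r : ℝ | ∃ v : (Fin n → Fin 2) → ℂ, (∑ i, Complex.normSq (v i)) = 1 ∧
    r = ∑ i, Complex.normSq ((prodMatrix g).mulVec v i)} with hSset
  have hlam : lambdaMaxGram (prodMatrix g) = sSup Sset := rfl
  have hmem1 : (1 : ℝ) ∈ Sset := by
    refine ⟨ψ, hψn, ?_⟩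
    show (1 : ℝ) = qNormSq (prodOp g ψ)
    rw [← hφ, hφn]
  have hbound : ∀ r ∈ Sset, (∑ j, Complex.normSq (b j)) * r ≤ 1 := by
    rintro r ⟨v, hv1, rfl⟩
    have h1 := hle v
    have hvq : qNormSq v = 1 := hv1
    rw [hvq] at h1
    refine le_trans ?_ h1
    rw [Finset.sum_mul]
    refine Finset.sum_le_sum fun j _ => ?_
    by_cases hbj : b j = 0
    · simp only [hbj, Complex.normSq_zero, zero_mul]
      exact Finset.sum_nonneg fun x _ => Complex.normSq_nonneg _
    · have h2 : qNormSq (prodOp (N j) v) = Complex.normSq (b j) * qNormSq (prodOp g v) := by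
        rw [key j hbj v, qNormSq_smul]
      rw [h2]
      exact le_of_eq rfl
  set S := ∑ j, Complex.normSq (b j) with hS
  have hS0 : 0 ≤ S := Finset.sum_nonneg fun j _ => Complex.normSq_nonneg _
  rcases eq_or_lt_of_le hS0 with hS0' | hSpos
  · rw [← hS0']
    by_cases hbdd : BddAbove Sset
    · have h1 : (0 : ℝ) ≤ sSup Sset := le_trans zero_le_one (le_csSup hbdd hmem1)
      rw [hlam]
      positivity
    · rw [hlam, Real.sSup_of_not_bddAbove hbdd]
      simp
  · have hbdd : BddAbove Sset := ⟨1 / S, fun r hr => by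
      have h1 := hbound r hr
      rw [le_div_iff₀ hSpos, mul_comm]
      exact h1⟩
    have hub : sSup Sset ≤ 1 / S := csSup_le ⟨1, hmem1⟩ fun r hr => by
      have h1 := hbound r hr
      rw [le_div_iff₀ hSpos, mul_comm]
      exact h1
    have hge1 : (1 : ℝ) ≤ sSup Sset := le_csSup hbdd hmem1
    rw [hlam, le_div_iff₀ (lt_of_lt_of_le zero_lt_one hge1)]
    calc S * sSup Sset ≤ S * (1 / S) := mul_le_mul_of_nonneg_left hub hS0
      _ = 1 := by field_simp
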